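/- Transvections between adjacent indices suffice on a line: the matrices E(i, i+1) and E(i+1, i) for 0 ≤ i < n−1 generate GL(n, GF(2)); i.e., every invertible Boolean matrix can be synthesized by a CNOT circuit whose gates act only on nearest-neighbor qubit pairs of a 1-D path. -/

import Mathlib

/-!
Over any commutative ring, transvections satisfy the Steinberg commutator relation
`[E_{ij}(a), E_{jk}(b)] = E_{ik}(ab)` for distinct `i, j, k`. Walking along a path of a graph
from `i` to `j`, this writes every transvection `E_{ij}(c)` as a product of transvections along
edges, so on a connected graph the edge transvections generate all transvections. Over `GF(2)`
the only invertible diagonal matrix is `1`, so transvections generate `GL(n, GF(2))`; applied to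
the path graph `0 — 1 — ⋯ — (n-1)` this gives the theorem.
-/

/-- Elementary transvection over GF(2): identity plus a 1 in position `(j, i)`. -/
def transvection2 (n : ℕ) (i j : Fin n) : Matrix (Fin n) (Fin n) (ZMod 2) :=
  1 + Matrix.single j i 1

open Matrix SimpleGraph

section Transvections

variable {ι R : Type*} [Fintype ι] [DecidableEq ι] [CommRing R]

theorem Matrix.transvection_commutator {i j k : ι} (hij : i ≠ j) (hjk : j ≠ k) (hik : i ≠ k)
    (a b : R) :
    transvection i j a * transvection j k b * transvection i j (-a) * transvection j k (-b) =
      transvection i k (a * b) := by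
  simp [transvection, add_mul, mul_add, single_mul_single_of_ne, hij.symm, hjk.symm, hik.symm,
    ← single_neg]
  abel

variable (R) in
def SimpleGraph.edgeTransvections (G : SimpleGraph ι) : Set (Matrix ι ι R) :=
  {M | ∃ i j, G.Adj i j ∧ ∃ c : R, transvection i j c = M}

theorem SimpleGraph.Reachable.transvection_mem_closure_edgeTransvections {G : SimpleGraph ι}
    {i j : ι} (h : G.Reachable i j) (hij : i ≠ j) (c : R) :
    transvection i j c ∈ Submonoid.closure (G.edgeTransvections R) := by
  obtain ⟨p⟩ := h
  induction p generalizing c with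
  | nil => exact absurd rfl hij
  | @cons i k j hadj p ih =>
    by_cases hkj : k = j
    · subst hkj
      exact Submonoid.subset_closure ⟨i, k, hadj, c, rfl⟩
    have edge (a : R) : transvection i k a ∈ Submonoid.closure (G.edgeTransvections R) :=
      Submonoid.subset_closure ⟨i, k, hadj, a, rfl⟩
    rw [← mul_one c, ← transvection_commutator hadj.ne hkj hij]
    exact mul_mem (mul_mem (mul_mem (edge c) (ih hkj 1)) (edge (-c))) (ih hkj (-1))

end Transvections

theorem Matrix.diagonal_zmod_two_eq_one_of_det_ne_zero {ι : Type*} [Fintype ι] [DecidableEq ι]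
    {D : ι → ZMod 2} (hD : (diagonal D).det ≠ 0) : diagonal D = 1 := by
  rw [det_diagonal, Finset.prod_ne_zero_iff] at hD
  rw [← diagonal_one]
  congr 1
  funext x
  have unit_eq_one : ∀ a : ZMod 2, a ≠ 0 → a = 1 := by decide
  exact unit_eq_one _ (hD x (Finset.mem_univ x))

theorem SimpleGraph.Preconnected.mem_closure_edgeTransvections {ι : Type*} [Fintype ι]
    [DecidableEq ι] {G : SimpleGraph ι} (hG : G.Preconnected) {M : Matrix ι ι (ZMod 2)}
    (hM : IsUnit M) : M ∈ Submonoid.closure (G.edgeTransvections (ZMod 2)) := by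
  refine diagonal_transvection_induction_of_det_ne_zero (· ∈ Submonoid.closure _) M
    ((isUnit_iff_isUnit_det M).1 hM).ne_zero ?_ ?_ ?_
  · intro D hD
    rw [diagonal_zmod_two_eq_one_of_det_ne_zero hD]
    exact one_mem _
  · intro t
    exact (hG t.i t.j).transvection_mem_closure_edgeTransvections t.hij t.c
  · intro A B _ _
    exact mul_mem

theorem exists_list_of_mem_closure_pathGraph_edgeTransvections {n : ℕ}
    {M : Matrix (Fin n) (Fin n) (ZMod 2)}
    (hM : M ∈ Submonoid.closure ((pathGraph n).edgeTransvections (ZMod 2))) :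
    ∃ L : List (Fin n × Fin n),
      (∀ p ∈ L, (p.1 : ℕ) + 1 = (p.2 : ℕ) ∨ (p.2 : ℕ) + 1 = (p.1 : ℕ)) ∧
      (L.map fun p => transvection2 n p.1 p.2).prod = M := by
  induction hM using Submonoid.closure_induction with
  | mem _ hM =>
    obtain ⟨i, j, hij, c, rfl⟩ := hM
    obtain rfl | rfl : c = 0 ∨ c = 1 := by revert c; decide
    · exact ⟨[], by simp, by simp⟩
    -- `transvection2` lists its indices in the opposite order: it is `transvection j i 1`.
    · exact ⟨[(j, i)], by simpa using pathGraph_adj.1 hij.symm,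
        by simp [transvection2, transvection]⟩
  | one => exact ⟨[], by simp, by simp⟩
  | mul _ _ _ _ hA hB =>
    obtain ⟨LA, hLA, rfl⟩ := hA
    obtain ⟨LB, hLB, rfl⟩ := hB
    exact ⟨LA ++ LB, fun p hp => (List.mem_append.1 hp).elim (hLA p) (hLB p), by simp⟩

theorem adjacent_transvections_generate_general {n : ℕ}
    (M : Matrix (Fin n) (Fin n) (ZMod 2)) (hM : IsUnit M) :
    ∃ L : List (Fin n × Fin n),
      (∀ p ∈ L, (p.1 : ℕ) + 1 = (p.2 : ℕ) ∨ (p.2 : ℕ) + 1 = (p.1 : ℕ)) ∧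
      (L.map fun p => transvection2 n p.1 p.2).prod = M :=
  exists_list_of_mem_closure_pathGraph_edgeTransvections
    ((pathGraph_preconnected n).mem_closure_edgeTransvections hM)

/-- Nearest-neighbor transvections on a 1-D line generate GL(n, GF(2)). -/
theorem adjacent_transvections_generate {n : ℕ} (hn : 1 ≤ n)
    (M : Matrix (Fin n) (Fin n) (ZMod 2)) (hM : IsUnit M) :
    ∃ L : List (Fin n × Fin n),
      (∀ p ∈ L, (p.1 : ℕ) + 1 = (p.2 : ℕ) ∨ (p.2 : ℕ) + 1 = (p.1 : ℕ)) ∧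
      (L.map fun p => transvection2 n p.1 p.2).prod = M :=
  adjacent_transvections_generate_general M hM
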